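/- arXiv:math/0601600 — 2 statements merged into one kernel-verified Lean document; each statement's English description precedes it below -/
import Mathlib

section
/- Let n = 2m with m ≥ 1 and let p ∈ S(n,0). Then |p|_0 = (1/n)^{1/(n-1)} if and only if p(z) = z^{2m} + e^{2iθ} z for some θ ∈ ℝ. Consequently the 0-maximal polynomials of even degree n = 2m are exactly the polynomials z^{2m} + e^{2iθ} z, θ ∈ ℝ. -/
/-!
Write `p = X q`, with `q` monic of degree `d = n - 1` and zeros in the closed unit disk. Since
`p'(0) = q(0)` and `p'` has leading coefficient `n`, the zeros `w` of `p'` satisfy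
`n ∏ |w| = |q(0)| = ∏ |z| ≤ 1`, so the smallest `|w|` is at most `t = n^(-1/(n-1))`.
In the equality case every `|w|` equals `t` and every zero of `q` has modulus `1`, so `q` and `p'`
both satisfy self-inversive relations `conj a_i * a_0 = conj lc * ρ^(2j) * a_j` for `i + j = d`.
As `p'_j = (j + 1) q_j`, a nonzero middle coefficient `q_j` forces `n - j = (j + 1) n t^(2j)`.
The ratio of the two sides is strictly log-convex in `j` on the first half and is inverted by
`j ↦ n - 1 - j`; for even `n` this rules out equality at every `1 ≤ j ≤ n - 2`.
Hence `q = X^d + q(0)` with `|q(0)| = 1`.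
-/

open Polynomial Complex

/-- The distance `|p|_α` from `α` to the zero set of `p'`. -/
noncomputable def critDist (p : Polynomial ℂ) (α : ℂ) : ℝ :=
  sInf {r : ℝ | ∃ w : ℂ, (Polynomial.derivative p).eval w = 0 ∧ r = dist α w}

/-- `S_n`: monic complex polynomials of degree `n` with all zeros in the closed unit disk. -/
def Sset (n : ℕ) : Set (Polynomial ℂ) :=
  {p | p.Monic ∧ p.natDegree = n ∧ ∀ z : ℂ, p.eval z = 0 → ‖z‖ ≤ 1}

open ComplexConjugate

theorem lt_zero_of_strictConvex {a : ℕ → ℝ} {N : ℕ} (h0 : a 0 = 0)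
    (hN : a N + a (N + 1) ≤ 0)
    (hconv : ∀ k, k + 1 ≤ N → a (k + 1) - a k < a (k + 2) - a (k + 1))
    {k : ℕ} (hk : 1 ≤ k) (hkN : k ≤ N) : a k < 0 := by
  have hslope : StrictMonoOn (fun i ↦ a (i + 1) - a i) (Set.Iic N) :=
    strictMonoOn_Iic_of_lt_succ fun i hi ↦ by simpa using hconv i hi
  obtain ⟨j, rfl⟩ : ∃ j, k = j + 1 := ⟨k - 1, by omega⟩
  rcases lt_or_ge (a (j + 1) - a j) 0 with hneg | hnonneg
  · have hanti : StrictAntiOn a (Set.Iic (j + 1)) := strictAntiOn_Iic_of_succ_lt fun i hi ↦ by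
      have := hslope.monotoneOn (show i ∈ Set.Iic N by simp; omega)
        (show j ∈ Set.Iic N by simp; omega) (by omega)
      simp only [Order.succ_eq_add_one]
      linarith
    simpa [h0] using hanti (by simp) (by simp) (by omega : 0 < j + 1)
  · have hmono : StrictMonoOn a (Set.Icc (j + 1) (N + 1)) :=
      strictMonoOn_of_lt_succ Set.ordConnected_Icc fun i _ hi hsi ↦ by
        simp only [Set.mem_Icc, Order.succ_eq_add_one] at hi hsi ⊢
        have := hslope (show j ∈ Set.Iic N by simp; omega) (show i ∈ Set.Iic N by simp; omega)
          (by omega)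
        linarith
    have h1 : a (j + 1) ≤ a N := hmono.monotoneOn (by simp; omega) (by simp; omega) hkN
    have h2 : a N < a (N + 1) := hmono (by simp; omega) (by simp; omega) (by omega)
    linarith

theorem lt_one_of_strictLogConvex {u : ℕ → ℝ} {N : ℕ} (hpos : ∀ k ≤ N + 1, 0 < u k)
    (h0 : u 0 = 1) (hN : u N * u (N + 1) ≤ 1)
    (hconv : ∀ k, k + 1 ≤ N → u (k + 1) ^ 2 < u k * u (k + 2))
    {k : ℕ} (hk : 1 ≤ k) (hkN : k ≤ N) : u k < 1 := by
  refine (Real.log_neg_iff (hpos k (by omega))).mp <|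
    lt_zero_of_strictConvex (a := fun k ↦ Real.log (u k)) (by simp [h0]) ?_ (fun i hi ↦ ?_) hk hkN
  · rw [← Real.log_mul (hpos N le_self_add).ne' (hpos _ le_rfl).ne']
    exact Real.log_nonpos (mul_pos (hpos N le_self_add) (hpos _ le_rfl)).le hN
  · have := Real.log_lt_log (pow_pos (hpos _ (by omega)) 2) (hconv i hi)
    rw [Real.log_pow, Real.log_mul (hpos i (by omega)).ne' (hpos _ (by omega)).ne'] at this
    push_cast at this
    linarith

/-- `coeffRatio n t k = 1` is the relation `n - k = (k + 1) n t^(2k)` that a nonzero `k`-th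
coefficient of `q` imposes when `p = X q` is extremal in degree `n`. -/
noncomputable def coeffRatio (n : ℕ) (t : ℝ) (k : ℕ) : ℝ :=
  (n - k) / (k + 1) / (n * t ^ (2 * k))

section coeffRatio

variable {n : ℕ} {t : ℝ}

theorem coeffRatio_zero (hn : n ≠ 0) : coeffRatio n t 0 = 1 := by
  simp [coeffRatio, hn]

theorem coeffRatio_pos (ht : 0 < t) {k : ℕ} (hk : k < n) : 0 < coeffRatio n t k := by
  have hkn : (k : ℝ) < n := by exact_mod_cast hk
  have : (0 : ℝ) < n - k := sub_pos.mpr hkn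
  have : (0 : ℝ) < n := (Nat.cast_nonneg k).trans_lt hkn
  unfold coeffRatio
  positivity

theorem coeffRatio_mul_coeffRatio (ht : n * t ^ (n - 1) = 1) {j k : ℕ} (hjk : j + k + 1 = n) :
    coeffRatio n t j * coeffRatio n t k = 1 := by
  have hn : (n : ℝ) = j + k + 1 := by exact_mod_cast hjk.symm
  have hpow : (n * t ^ (2 * j)) * (n * t ^ (2 * k)) = (n * t ^ (n - 1)) ^ 2 := by
    rw [show n - 1 = j + k by omega]; ring
  rw [ht, one_pow] at hpow
  unfold coeffRatio
  rw [div_mul_div_comm, hpow, div_one, hn]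
  field_simp
  ring

theorem coeffRatio_sq_lt (ht : 0 < t) {k : ℕ} (hk : 2 * k + 3 < n) :
    coeffRatio n t (k + 1) ^ 2 < coeffRatio n t k * coeffRatio n t (k + 2) := by
  have hkn : (2 * k + 3 : ℝ) < n := by exact_mod_cast hk
  have hpow : (n * t ^ (2 * (k + 1))) ^ 2 = (n * t ^ (2 * k)) * (n * t ^ (2 * (k + 2))) := by
    ring
  have hpos : 0 < (n * t ^ (2 * (k + 1))) ^ 2 := by
    have : (0 : ℝ) < n := by linarith
    positivity
  unfold coeffRatio
  rw [div_pow, div_mul_div_comm, ← hpow, div_lt_div_iff_of_pos_right hpos]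
  push_cast
  rw [div_pow, div_mul_div_comm, div_lt_div_iff₀ (by positivity) (by positivity)]
  nlinarith [mul_pos (show (0 : ℝ) < k + 2 by positivity) (show (0 : ℝ) < n - k - 1 by linarith)]

theorem coeffRatio_lt_one (hn : Even n) (ht0 : 0 < t) (ht : n * t ^ (n - 1) = 1) {k : ℕ}
    (hk : 1 ≤ k) (hkn : 2 * k + 1 < n) : coeffRatio n t k < 1 := by
  -- For even `n = 2m` the symmetry `k ↦ n - 1 - k` pairs `m - 1` with `m`.
  obtain ⟨m, rfl⟩ := hn
  have hpos : ∀ i ≤ m - 1 + 1, 0 < coeffRatio (m + m) t i :=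
    fun i hi ↦ coeffRatio_pos ht0 (by omega)
  have hsym : coeffRatio (m + m) t (m - 1) * coeffRatio (m + m) t (m - 1 + 1) = 1 :=
    coeffRatio_mul_coeffRatio ht (by omega)
  exact lt_one_of_strictLogConvex hpos (coeffRatio_zero (by omega)) hsym.le
    (fun i hi ↦ coeffRatio_sq_lt ht0 (by omega)) hk (by omega)

theorem coeffRatio_ne_one (hn : Even n) (ht0 : 0 < t) (ht : n * t ^ (n - 1) = 1) {k : ℕ}
    (hk : 1 ≤ k) (hkn : k + 2 ≤ n) : coeffRatio n t k ≠ 1 := by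
  obtain ⟨m, rfl⟩ := hn
  rcases lt_or_ge (2 * k + 1) (m + m) with hlt | hge
  · exact (coeffRatio_lt_one ⟨m, rfl⟩ ht0 ht hk hlt).ne
  · have hsym := coeffRatio_mul_coeffRatio ht (show (m + m - 1 - k) + k + 1 = m + m by omega)
    have := coeffRatio_lt_one ⟨m, rfl⟩ ht0 ht (k := m + m - 1 - k) (by omega) (by omega)
    intro h
    rw [h, mul_one] at hsym
    linarith

end coeffRatio

theorem norm_coeff_zero_eq_mul_prod_norm_roots (f : ℂ[X]) :
    ‖f.coeff 0‖ = ‖f.leadingCoeff‖ * (f.roots.map (‖·‖)).prod := by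
  rw [(IsAlgClosed.splits f).coeff_zero_eq_leadingCoeff_mul_prod_roots, norm_mul, norm_mul,
    norm_pow, norm_neg, norm_one, one_pow, one_mul]
  simpa using congrArg (‖f.leadingCoeff‖ * ·) (map_multiset_prod normHom f.roots)

theorem Multiset.forall_eq_of_le_of_prod_le_pow_card {s : Multiset ℝ} {t : ℝ} (ht : 0 < t)
    (hle : ∀ x ∈ s, t ≤ x) (hprod : s.prod ≤ t ^ card s) : ∀ x ∈ s, x = t := by
  intro x hx
  obtain ⟨s', rfl⟩ := exists_cons_of_mem hx
  have hs' : t ^ card s' ≤ s'.prod := by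
    simpa using prod_map_le_prod_map₀ (fun _ ↦ t) id (fun _ _ ↦ ht.le)
      (fun y hy ↦ hle y (mem_cons_of_mem hy))
  have htx : t ≤ x := hle x (mem_cons_self x s')
  rw [prod_cons, card_cons, pow_succ'] at hprod
  by_contra hne
  have := mul_lt_mul_of_pos_right (lt_of_le_of_ne htx (Ne.symm hne)) (pow_pos ht (card s'))
  nlinarith

theorem Multiset.forall_eq_one_of_le_one_of_one_le_prod {s : Multiset ℝ}
    (h0 : ∀ x ∈ s, 0 ≤ x) (h1 : ∀ x ∈ s, x ≤ 1) (hprod : 1 ≤ s.prod) : ∀ x ∈ s, x = 1 := by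
  intro x hx
  obtain ⟨s', rfl⟩ := exists_cons_of_mem hx
  have hs' : s'.prod ≤ 1 := by
    simpa using prod_map_le_prod_map₀ id (fun _ ↦ 1) (fun y hy ↦ h0 y (mem_cons_of_mem hy))
      (fun y hy ↦ h1 y (mem_cons_of_mem hy))
  have hx0 := h0 x (mem_cons_self x s')
  have hx1 := h1 x (mem_cons_self x s')
  rw [prod_cons] at hprod
  nlinarith

theorem conj_coeff_mul_coeff_zero_of_norm_eq {ρ : ℝ} (s : Multiset ℂ) (hs : ∀ z ∈ s, ‖z‖ = ρ)
    {i j : ℕ} (hij : i + j = Multiset.card s) :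
    conj ((s.map (X - C ·)).prod.coeff i) * (s.map (X - C ·)).prod.coeff 0 =
      (ρ : ℂ) ^ (2 * j) * (s.map (X - C ·)).prod.coeff j := by
  induction s using Multiset.induction generalizing i j with
  | empty =>
    obtain ⟨rfl, rfl⟩ : i = 0 ∧ j = 0 := by simpa using hij
    simp
  | cons a s ih =>
    have hs' : ∀ z ∈ s, ‖z‖ = ρ := fun z hz ↦ hs z (Multiset.mem_cons_of_mem hz)
    have ha : a * conj a = (ρ : ℂ) ^ 2 := by
      rw [mul_conj, normSq_eq_norm_sq, hs a (Multiset.mem_cons_self a s)]; push_cast; rfl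
    rw [Multiset.card_cons] at hij
    rw [Multiset.map_cons, Multiset.prod_cons]
    set f := (s.map (X - C ·)).prod
    have htop : f.coeff (Multiset.card s) = 1 :=
      natDegree_multiset_prod_X_sub_C_eq_card s ▸ (monic_multiset_prod_of_monic _ _ fun z _ ↦
        monic_X_sub_C z).coeff_natDegree
    have hvanish : f.coeff (Multiset.card s + 1) = 0 :=
      coeff_eq_zero_of_natDegree_lt (by rw [natDegree_multiset_prod_X_sub_C_eq_card]; omega)
    have hcoeff0 : ((X - C a) * f).coeff 0 = -a * f.coeff 0 := by simp [coeff_sub]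
    rw [hcoeff0]
    rcases i with _ | i <;> rcases j with _ | j
    · simp at hij
    · obtain rfl : j = Multiset.card s := by omega
      have := ih hs' (i := 0) (j := Multiset.card s) (by simp)
      rw [htop, mul_one] at this
      rw [hcoeff0, coeff_X_sub_C_mul, htop, hvanish]
      calc conj (-a * f.coeff 0) * (-a * f.coeff 0)
          = a * conj a * (conj (f.coeff 0) * f.coeff 0) := by simp only [map_mul, map_neg]; ring
        _ = _ := by rw [ha, this]; ring
    · obtain rfl : i = Multiset.card s := by omega
      rw [coeff_X_sub_C_mul, htop, hvanish]
      simp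
    · rw [coeff_X_sub_C_mul, coeff_X_sub_C_mul, map_sub, map_mul]
      have h1 := ih hs' (i := i) (j := j + 1) (by omega)
      have h2 := ih hs' (i := i + 1) (j := j) (by omega)
      calc (conj (f.coeff i) - conj a * conj (f.coeff (i + 1))) * (-a * f.coeff 0)
          = -a * (conj (f.coeff i) * f.coeff 0)
              + a * conj a * (conj (f.coeff (i + 1)) * f.coeff 0) := by ring
        _ = _ := by rw [h1, h2, ha]; ring

theorem conj_coeff_mul_coeff_zero_of_norm_roots_eq {ρ : ℝ} (f : ℂ[X])
    (hf : ∀ z ∈ f.roots, ‖z‖ = ρ) {i j : ℕ} (hij : i + j = f.natDegree) :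
    conj (f.coeff i) * f.coeff 0 = conj f.leadingCoeff * (ρ : ℂ) ^ (2 * j) * f.coeff j := by
  have hcoeff (k : ℕ) :
      f.coeff k = f.leadingCoeff * (f.roots.map (X - C ·)).prod.coeff k := by
    conv_lhs => rw [(IsAlgClosed.splits f).eq_prod_roots]
    exact coeff_C_mul _
  have := conj_coeff_mul_coeff_zero_of_norm_eq f.roots hf
    (hij.trans IsAlgClosed.card_roots_eq_natDegree.symm)
  rw [hcoeff i, hcoeff 0, hcoeff j, map_mul]
  linear_combination conj f.leadingCoeff * f.leadingCoeff * this

theorem critDist_nonneg (p : ℂ[X]) (α : ℂ) : 0 ≤ critDist p α :=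
  Real.sInf_nonneg <| by rintro _ ⟨w, -, rfl⟩; exact dist_nonneg

theorem critDist_le_dist {p : ℂ[X]} {α w : ℂ} (hw : (derivative p).eval w = 0) :
    critDist p α ≤ dist α w :=
  csInf_le ⟨0, by rintro _ ⟨w, -, rfl⟩; exact dist_nonneg⟩ ⟨w, hw, rfl⟩

theorem critDist_eq_of_forall_dist_eq {p : ℂ[X]} {α : ℂ} {r : ℝ}
    (hex : ∃ w, (derivative p).eval w = 0) (h : ∀ w, (derivative p).eval w = 0 → dist α w = r) :
    critDist p α = r := by
  have : {r : ℝ | ∃ w : ℂ, (derivative p).eval w = 0 ∧ r = dist α w} = {r} := by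
    refine Set.eq_singleton_iff_unique_mem.mpr ⟨?_, ?_⟩
    · obtain ⟨w, hw⟩ := hex
      exact ⟨w, hw, (h w hw).symm⟩
    · rintro _ ⟨w, hw, rfl⟩
      exact h w hw
  rw [critDist, this, csInf_singleton]

theorem coeff_derivative_X_mul (q : ℂ[X]) (j : ℕ) :
    (derivative (X * q)).coeff j = (j + 1) * q.coeff j := by
  rw [coeff_derivative, coeff_X_mul, mul_comm]

section

variable {q : ℂ[X]}

theorem natDegree_derivative_X_mul (hq : q.Monic) :
    (derivative (X * q)).natDegree = q.natDegree := by
  refine natDegree_eq_of_le_of_coeff_ne_zero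
    (natDegree_le_iff_coeff_eq_zero.mpr fun j hj ↦ ?_) ?_
  · rw [coeff_derivative_X_mul, coeff_eq_zero_of_natDegree_lt hj, mul_zero]
  · rw [coeff_derivative_X_mul, hq.coeff_natDegree, mul_one]
    exact Nat.cast_add_one_ne_zero q.natDegree

theorem leadingCoeff_derivative_X_mul (hq : q.Monic) :
    (derivative (X * q)).leadingCoeff = (q.natDegree + 1 : ℂ) := by
  rw [leadingCoeff, natDegree_derivative_X_mul hq, coeff_derivative_X_mul, hq.coeff_natDegree,
    mul_one]

theorem norm_coeff_zero_eq_mul_prod_norm_roots_derivative (hq : q.Monic) :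
    ‖q.coeff 0‖ = (q.natDegree + 1) * ((derivative (X * q)).roots.map (‖·‖)).prod := by
  have := norm_coeff_zero_eq_mul_prod_norm_roots (derivative (X * q))
  rwa [coeff_derivative_X_mul, leadingCoeff_derivative_X_mul hq, Nat.cast_zero, zero_add,
    one_mul, ← Nat.cast_succ, Complex.norm_natCast, Nat.cast_succ] at this

theorem derivative_X_mul_ne_zero (hq : q.Monic) : derivative (X * q) ≠ 0 := by
  rw [← leadingCoeff_ne_zero, leadingCoeff_derivative_X_mul hq]
  exact Nat.cast_add_one_ne_zero q.natDegree

theorem norm_coeff_zero_le_one (hq : q.Monic) (hroots : ∀ z ∈ q.roots, ‖z‖ ≤ 1) :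
    ‖q.coeff 0‖ ≤ 1 := by
  rw [norm_coeff_zero_eq_mul_prod_norm_roots, hq.leadingCoeff, norm_one, one_mul]
  simpa using Multiset.prod_map_le_prod_map₀ (‖·‖) (fun _ ↦ (1 : ℝ)) (fun z _ ↦ norm_nonneg z)
    hroots

theorem succ_mul_pow_le_norm_coeff_zero (hq : q.Monic) {r : ℝ} (hr0 : 0 ≤ r)
    (hr : ∀ w ∈ (derivative (X * q)).roots, r ≤ ‖w‖) :
    (q.natDegree + 1) * r ^ q.natDegree ≤ ‖q.coeff 0‖ := by
  have hcard : Multiset.card (derivative (X * q)).roots = q.natDegree := by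
    rw [IsAlgClosed.card_roots_eq_natDegree, natDegree_derivative_X_mul hq]
  have hlow : r ^ q.natDegree ≤ ((derivative (X * q)).roots.map (‖·‖)).prod := by
    have := Multiset.prod_map_le_prod_map₀ (fun _ ↦ r) (‖·‖) (fun _ _ ↦ hr0) hr
    rwa [Multiset.map_const', Multiset.prod_replicate, hcard] at this
  rw [norm_coeff_zero_eq_mul_prod_norm_roots_derivative hq]
  gcongr

theorem norm_roots_eq_of_succ_mul_pow_eq_one (hq : q.Monic) (hroots : ∀ z ∈ q.roots, ‖z‖ ≤ 1)
    {r : ℝ} (hr0 : 0 < r) (hr : ∀ w ∈ (derivative (X * q)).roots, r ≤ ‖w‖)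
    (heq : (q.natDegree + 1) * r ^ q.natDegree = 1) :
    ‖q.coeff 0‖ = 1 ∧ (∀ w ∈ (derivative (X * q)).roots, ‖w‖ = r) ∧ ∀ z ∈ q.roots, ‖z‖ = 1 := by
  have hq0 : ‖q.coeff 0‖ = 1 :=
    (norm_coeff_zero_le_one hq hroots).antisymm (heq ▸ succ_mul_pow_le_norm_coeff_zero hq hr0.le hr)
  refine ⟨hq0, fun w hw ↦ ?_, fun z hz ↦ ?_⟩
  · have hprod := norm_coeff_zero_eq_mul_prod_norm_roots_derivative hq
    refine Multiset.forall_eq_of_le_of_prod_le_pow_card hr0 (Multiset.forall_mem_map_iff.mpr hr)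
      ?_ _ (Multiset.mem_map_of_mem _ hw)
    rw [Multiset.card_map, IsAlgClosed.card_roots_eq_natDegree, natDegree_derivative_X_mul hq]
    refine le_of_mul_le_mul_left ?_ (Nat.cast_add_one_pos q.natDegree)
    linarith
  · have hprod := norm_coeff_zero_eq_mul_prod_norm_roots q
    rw [hq.leadingCoeff, norm_one, one_mul, hq0] at hprod
    exact Multiset.forall_eq_one_of_le_one_of_one_le_prod
      (Multiset.forall_mem_map_iff.mpr fun z _ ↦ norm_nonneg z)
      (Multiset.forall_mem_map_iff.mpr hroots)
      hprod.le _ (Multiset.mem_map_of_mem _ hz)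

theorem coeff_eq_zero_of_norm_roots_eq (hq : q.Monic) (heven : Even (q.natDegree + 1)) {t : ℝ}
    (ht0 : 0 < t) (ht : (q.natDegree + 1) * t ^ q.natDegree = 1)
    (hP : ∀ w ∈ (derivative (X * q)).roots, ‖w‖ = t) (hQ : ∀ z ∈ q.roots, ‖z‖ = 1)
    {j : ℕ} (hj1 : 1 ≤ j) (hjd : j < q.natDegree) : q.coeff j = 0 := by
  obtain ⟨i, hij⟩ : ∃ i, i + j = q.natDegree := ⟨q.natDegree - j, by omega⟩
  have hPself := conj_coeff_mul_coeff_zero_of_norm_roots_eq _ hP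
    (hij.trans (natDegree_derivative_X_mul hq).symm)
  have hQself := conj_coeff_mul_coeff_zero_of_norm_roots_eq q hQ hij
  simp only [coeff_derivative_X_mul, leadingCoeff_derivative_X_mul hq, map_mul, map_add,
    map_natCast, map_one, CharP.cast_eq_zero, zero_add, one_mul] at hPself
  simp only [hq.leadingCoeff, map_one, ofReal_one, one_pow, one_mul] at hQself
  by_contra hne
  have hreal : (i : ℝ) + 1 = (q.natDegree + 1) * t ^ (2 * j) * (j + 1) := by
    have : ((i : ℂ) + 1) * q.coeff j = (q.natDegree + 1) * t ^ (2 * j) * (j + 1) * q.coeff j := by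
      linear_combination hPself - ((i : ℂ) + 1) * hQself
    exact_mod_cast mul_right_cancel₀ hne this
  refine coeffRatio_ne_one heven ht0 (by simpa using ht) hj1 (by omega) ?_
  have hi : (i : ℝ) = q.natDegree - j := by rw [← hij]; push_cast; ring
  rw [coeffRatio, div_div, div_eq_one_iff_eq (by positivity)]
  push_cast
  linear_combination hreal - hi

theorem eq_X_pow_add_C_of_coeff_eq_zero (hq : q.Monic) (hd : 0 < q.natDegree)
    (h : ∀ j, 1 ≤ j → j < q.natDegree → q.coeff j = 0) :
    q = X ^ q.natDegree + C (q.coeff 0) := by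
  ext j
  rw [coeff_add, coeff_X_pow, coeff_C]
  rcases Nat.lt_trichotomy j q.natDegree with hj | rfl | hj
  · rcases Nat.eq_zero_or_pos j with rfl | hj0
    · simp [hd.ne]
    · simp [hj.ne, hj0.ne', h j hj0 hj]
  · simp [hq.coeff_natDegree, hd.ne']
  · simp [hj.ne', (hd.trans hj).ne', coeff_eq_zero_of_natDegree_lt hj]

end

noncomputable def critBound (n : ℕ) : ℝ :=
  ((1 : ℝ) / n) ^ ((1 : ℝ) / ((n : ℝ) - 1))

theorem critBound_pos {n : ℕ} (hn : 2 ≤ n) : 0 < critBound n :=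
  Real.rpow_pos_of_pos (one_div_pos.mpr (by exact_mod_cast (by omega : 0 < n))) _

theorem natCast_mul_critBound_pow {n : ℕ} (hn : 2 ≤ n) : n * critBound n ^ (n - 1) = 1 := by
  have hn' : (2 : ℝ) ≤ n := by exact_mod_cast hn
  rw [critBound, ← Real.rpow_natCast, ← Real.rpow_mul (by positivity), Nat.cast_sub (by omega),
    Nat.cast_one, one_div_mul_cancel (by linarith), Real.rpow_one]
  field_simp

theorem exists_eq_X_mul_of_mem_Sset {n : ℕ} {p : ℂ[X]} (hp : p ∈ Sset n) (h0 : p.eval 0 = 0) :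
    ∃ q : ℂ[X], p = X * q ∧ q.Monic ∧ q.natDegree + 1 = n ∧ ∀ z ∈ q.roots, ‖z‖ ≤ 1 := by
  obtain ⟨hmonic, hdeg, hroots⟩ := hp
  obtain ⟨q, rfl⟩ : X ∣ p := by rwa [X_dvd_iff, coeff_zero_eq_eval_zero]
  have hq : q.Monic := monic_X.of_mul_monic_left hmonic
  refine ⟨q, rfl, hq, ?_, fun z hz ↦ hroots z ?_⟩
  · rw [← hdeg, natDegree_mul X_ne_zero hq.ne_zero, natDegree_X, add_comm]
  · rw [eval_mul, (mem_roots hq.ne_zero).mp hz, mul_zero]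

theorem critDist_le_critBound {n : ℕ} (hn : 2 ≤ n) {p : ℂ[X]} (hp : p ∈ Sset n)
    (h0 : p.eval 0 = 0) : critDist p 0 ≤ critBound n := by
  obtain ⟨q, rfl, hq, rfl, hroots⟩ := exists_eq_X_mul_of_mem_Sset hp h0
  have ht := natCast_mul_critBound_pow hn
  rw [Nat.add_sub_cancel, Nat.cast_add_one] at ht
  have hr : ∀ w ∈ (derivative (X * q)).roots, critDist (X * q) 0 ≤ ‖w‖ := fun w hw ↦ by
    simpa using critDist_le_dist (α := 0) ((mem_roots (derivative_X_mul_ne_zero hq)).mp hw)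
  have hle : (q.natDegree + 1) * critDist (X * q) 0 ^ q.natDegree ≤
      (q.natDegree + 1) * critBound (q.natDegree + 1) ^ q.natDegree := by
    rw [ht]
    exact (succ_mul_pow_le_norm_coeff_zero hq (critDist_nonneg _ _) hr).trans
      (norm_coeff_zero_le_one hq hroots)
  exact (pow_le_pow_iff_left₀ (critDist_nonneg _ _) (critBound_pos hn).le (by omega)).mp
    (le_of_mul_le_mul_left hle (Nat.cast_add_one_pos _))

theorem eq_X_pow_add_C_mul_X_of_critDist_eq {n : ℕ} (heven : Even n) (hn : 2 ≤ n) {p : ℂ[X]}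
    (hp : p ∈ Sset n) (h0 : p.eval 0 = 0) (h : critDist p 0 = critBound n) :
    ∃ c : ℂ, ‖c‖ = 1 ∧ p = X ^ n + C c * X := by
  obtain ⟨q, rfl, hq, rfl, hroots⟩ := exists_eq_X_mul_of_mem_Sset hp h0
  have ht := natCast_mul_critBound_pow hn
  rw [Nat.add_sub_cancel, Nat.cast_add_one] at ht
  have hr : ∀ w ∈ (derivative (X * q)).roots, critBound (q.natDegree + 1) ≤ ‖w‖ := fun w hw ↦ by
    simpa [h] using critDist_le_dist (α := 0) ((mem_roots (derivative_X_mul_ne_zero hq)).mp hw)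
  obtain ⟨hq0, hP, hQ⟩ := norm_roots_eq_of_succ_mul_pow_eq_one hq hroots (critBound_pos hn) hr ht
  have hshape := eq_X_pow_add_C_of_coeff_eq_zero hq (by omega) fun j hj1 hjd ↦
    coeff_eq_zero_of_norm_roots_eq hq heven (critBound_pos hn) ht hP hQ hj1 hjd
  refine ⟨q.coeff 0, hq0, ?_⟩
  conv_lhs => rw [hshape, mul_add, ← pow_succ', mul_comm X]

theorem X_pow_add_C_mul_X_mem_Sset {n : ℕ} (hn : 2 ≤ n) {c : ℂ} (hc : ‖c‖ ≤ 1) :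
    X ^ n + C c * X ∈ Sset n := by
  have hlt : (C c * X).degree < (X ^ n : ℂ[X]).degree := by
    rw [degree_X_pow]
    exact (degree_C_mul_X_le c).trans_lt (by exact_mod_cast hn)
  refine ⟨(monic_X_pow n).add_of_left hlt, ?_, fun z hz ↦ ?_⟩
  · rw [natDegree_add_eq_left_of_degree_lt hlt, natDegree_X_pow]
  · rcases eq_or_ne z 0 with rfl | hz0
    · simp
    have hpow : z ^ (n - 1) = -c := by
      simp only [eval_add, eval_pow, eval_X, eval_mul, eval_C] at hz
      apply mul_left_cancel₀ hz0
      rw [← pow_succ', Nat.sub_add_cancel (by omega)]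
      linear_combination hz
    have : ‖z‖ ^ (n - 1) ≤ 1 ^ (n - 1) := by rw [← norm_pow, hpow, norm_neg, one_pow]; exact hc
    exact (pow_le_pow_iff_left₀ (norm_nonneg z) zero_le_one (by omega)).mp this

theorem critDist_X_pow_add_C_mul_X {n : ℕ} (hn : 2 ≤ n) {c : ℂ} (hc : ‖c‖ = 1) :
    critDist (X ^ n + C c * X) 0 = critBound n := by
  have hderiv : derivative (X ^ n + C c * X) = C (n : ℂ) * X ^ (n - 1) + C c := by
    simp [derivative_X_pow]
  have hcrit (w : ℂ) : (derivative (X ^ n + C c * X)).eval w = 0 ↔ w ^ (n - 1) = -c / n := by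
    have : (n : ℂ) ≠ 0 := by exact_mod_cast (show n ≠ 0 by omega)
    rw [hderiv, eq_div_iff this]
    simp only [eval_add, eval_mul, eval_C, eval_pow, eval_X]
    constructor <;> intro h <;> linear_combination h
  refine critDist_eq_of_forall_dist_eq ?_ fun w hw ↦ ?_
  · obtain ⟨w, hw⟩ := IsAlgClosed.exists_pow_nat_eq (-c / n) (show 0 < n - 1 by omega)
    exact ⟨w, (hcrit w).mpr hw⟩
  · have hnorm : (n : ℝ) * ‖w‖ ^ (n - 1) = 1 := by
      have := congrArg (‖·‖) ((hcrit w).mp hw)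
      simp only [norm_pow, norm_div, norm_neg, hc, Complex.norm_natCast] at this
      rw [this]; field_simp
    rw [dist_zero_left]
    refine (pow_left_inj₀ (norm_nonneg w) (critBound_pos hn).le (show n - 1 ≠ 0 by omega)).mp ?_
    exact mul_left_cancel₀ (by positivity) (hnorm.trans (natCast_mul_critBound_pow hn).symm)

theorem exists_exp_two_mul_mul_I_eq_iff (c : ℂ) : (∃ θ : ℝ, exp (2 * θ * I) = c) ↔ ‖c‖ = 1 := by
  constructor
  · rintro ⟨θ, rfl⟩
    simpa using Complex.norm_exp_ofReal_mul_I (2 * θ)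
  · intro hc
    refine ⟨arg c / 2, ?_⟩
    simpa [hc, mul_div_cancel₀] using Complex.norm_mul_exp_arg_mul_I c

/-- For `n = 2m`, `m ≥ 1`, and `p ∈ S(n,0)`: `|p|₀ = (1/n)^{1/(n-1)}` iff
`p(z) = z^{2m} + e^{2iθ} z` for some real `θ`; consequently the `0`-maximal polynomials of
even degree `n = 2m` are exactly these polynomials. -/
theorem stmt_4 (m : ℕ) (hm : 1 ≤ m) (n : ℕ) (hn : n = 2 * m)
    (p : Polynomial ℂ) (hp : p ∈ Sset n) (h0 : p.eval 0 = 0) :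
    (critDist p 0 = ((1 : ℝ) / n) ^ ((1 : ℝ) / ((n : ℝ) - 1)) ↔
      ∃ θ : ℝ, p = X ^ (2 * m) + C (Complex.exp (2 * θ * Complex.I)) * X) ∧
    ((∀ q ∈ Sset n, q.eval 0 = 0 → critDist q 0 ≤ critDist p 0) ↔
      ∃ θ : ℝ, p = X ^ (2 * m) + C (Complex.exp (2 * θ * Complex.I)) * X) := by
  have hn2 : 2 ≤ n := by omega
  have hshape : (∃ θ : ℝ, p = X ^ (2 * m) + C (exp (2 * θ * I)) * X) ↔
      ∃ c : ℂ, ‖c‖ = 1 ∧ p = X ^ n + C c * X := by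
    rw [← hn]
    constructor
    · rintro ⟨θ, rfl⟩
      exact ⟨_, (exists_exp_two_mul_mul_I_eq_iff _).mp ⟨θ, rfl⟩, rfl⟩
    · rintro ⟨c, hc, rfl⟩
      obtain ⟨θ, rfl⟩ := (exists_exp_two_mul_mul_I_eq_iff c).mpr hc
      exact ⟨θ, rfl⟩
  have hextremal : critDist p 0 = critBound n ↔ ∃ c : ℂ, ‖c‖ = 1 ∧ p = X ^ n + C c * X :=
    ⟨eq_X_pow_add_C_mul_X_of_critDist_eq (hn ▸ even_two_mul m) hn2 hp h0,
      fun ⟨_, hc, hpc⟩ ↦ hpc ▸ critDist_X_pow_add_C_mul_X hn2 hc⟩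
  have hmaximal : (∀ q ∈ Sset n, q.eval 0 = 0 → critDist q 0 ≤ critDist p 0) ↔
      critDist p 0 = critBound n := by
    refine ⟨fun h ↦ (critDist_le_critBound hn2 hp h0).antisymm ?_,
      fun h q hq hq0 ↦ h ▸ critDist_le_critBound hn2 hq hq0⟩
    rw [← critDist_X_pow_add_C_mul_X hn2 norm_one]
    exact h _ (X_pow_add_C_mul_X_mem_Sset hn2 norm_one.le)
      (by simp [zero_pow (show n ≠ 0 by omega)])
  exact ⟨hextremal.trans hshape.symm, hmaximal.trans (hextremal.trans hshape.symm)⟩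
end

section
/- For every θ ∈ ℝ, the polynomial p(z) = z^3 + e^{iθ} z is not locally maximal for Sendov's conjecture: for every ε > 0 there exists q ∈ S_3 with Δ(q,p) < ε and d(q) > d(p). (For instance, with θ = π, the polynomials q_t(z) = (z - it)(z^2 - 1) satisfy d(q_t) = √((1+t^2)/3) > d(z^3 - z) = 1/√3 for all sufficiently small t > 0.) -/
/-!
Write `p = z (z² - u²)` with `|u| = 1`. Its critical points are `±u/√3`, so `d(p) ≤ 1/√3`.
Moving the zero at the origin to `s = i t u` gives `q = (z - s)(z² - u²)`, with `Δ(q, p) ≤ t`;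
writing a critical point of `q` as `w = s + u y`, the equation `q'(w) = 0` becomes
`3y² + 4ity = 1 + t²`, all of whose solutions have `|y|² = (1 + t²)/3`.
Hence `d(q) ≥ |w - s| = √((1 + t²)/3) > d(p)`.
-/

open Polynomial Complex

/-- `d(p) = max_{z : p(z)=0} min_{w : p'(w)=0} |z - w|`. -/
noncomputable def sendovD (p : Polynomial ℂ) : ℝ :=
  sSup {r : ℝ | ∃ z : ℂ, p.eval z = 0 ∧ r = critDist p z}

/-- The distance `Δ(p,q)`: minimum over all matchings (labelings with multiplicity) of the
zeros of `p` and `q` of the largest distance between matched zeros. -/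
noncomputable def polyDelta (n : ℕ) (p q : Polynomial ℂ) : ℝ :=
  sInf {r : ℝ | ∃ z ζ : Fin n → ℂ,
    p = ∏ i, (Polynomial.X - Polynomial.C (z i)) ∧
    q = ∏ i, (Polynomial.X - Polynomial.C (ζ i)) ∧
    r = sSup (Set.range fun i => dist (z i) (ζ i))}

lemma critDist_le {p : ℂ[X]} {z w : ℂ} (hw : (derivative p).eval w = 0) :
    critDist p z ≤ dist z w :=
  csInf_le ⟨0, by rintro r ⟨w, -, rfl⟩; exact dist_nonneg⟩ ⟨w, hw, rfl⟩

lemma le_critDist {p : ℂ[X]} (hp : 2 ≤ p.natDegree) {z : ℂ} {c : ℝ}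
    (h : ∀ w, (derivative p).eval w = 0 → c ≤ dist z w) : c ≤ critDist p z := by
  have hdeg : 0 < (derivative p).degree := by
    rw [degree_derivative (by lia)]
    exact_mod_cast (by lia : 0 < p.natDegree - 1)
  obtain ⟨w, hw⟩ := Complex.exists_root hdeg
  exact le_csInf ⟨_, w, hw, rfl⟩ (by rintro r ⟨w, hw, rfl⟩; exact h w hw)

lemma sendovD_le {p : ℂ[X]} {c : ℝ} (hc : 0 ≤ c) (h : ∀ z, p.eval z = 0 → critDist p z ≤ c) :
    sendovD p ≤ c :=
  Real.sSup_le (by rintro r ⟨z, hz, rfl⟩; exact h z hz) hc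

lemma critDist_le_sendovD {p : ℂ[X]} (hp : p ≠ 0) {z : ℂ} (hz : p.eval z = 0) :
    critDist p z ≤ sendovD p := by
  have hfin : {r : ℝ | ∃ z : ℂ, p.eval z = 0 ∧ r = critDist p z}.Finite := by
    convert (finite_setOfPred_isRoot hp).image (critDist p) using 1
    ext r
    simp [eq_comm]
  exact le_csSup hfin.bddAbove ⟨z, hz, rfl⟩

lemma polyDelta_le {n : ℕ} {p q : ℂ[X]} {z ζ : Fin n → ℂ} (hp : p = ∏ i, (X - C (z i)))
    (hq : q = ∏ i, (X - C (ζ i))) {c : ℝ} (hc : 0 ≤ c) (h : ∀ i, dist (z i) (ζ i) ≤ c) :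
    polyDelta n p q ≤ c := by
  unfold polyDelta
  refine csInf_le_of_le (b := sSup (Set.range fun i => dist (z i) (ζ i))) ⟨0, ?_⟩
    ⟨z, ζ, hp, hq, rfl⟩ ?_
  · rintro r ⟨z, ζ, -, -, rfl⟩
    exact Real.sSup_nonneg (by rintro _ ⟨i, rfl⟩; exact dist_nonneg)
  · exact Real.sSup_le (by rintro _ ⟨i, rfl⟩; exact h i) hc

lemma norm_sq_eq_of_quadratic {t : ℝ} (ht : t ^ 2 ≤ 3) {y : ℂ}
    (hy : 3 * y ^ 2 + 4 * t * I * y = 1 + t ^ 2) : ‖y‖ ^ 2 = (1 + t ^ 2) / 3 := by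
  have hre := congrArg re hy
  have him := congrArg im hy
  simp only [sq, add_re, mul_re, re_ofNat, im_ofNat, mul_im, zero_mul, sub_zero, ofReal_re,
    ofReal_im, mul_zero, I_re, add_zero, I_im, mul_one, sub_self, zero_sub, one_re, add_im,
    zero_add, one_im] at hre him
  rw [Complex.sq_norm, normSq_apply]
  rcases mul_eq_zero.1 (by linear_combination him / 2 : y.re * (3 * y.im + 2 * t) = 0) with h | h
  · rw [h] at hre ⊢
    nlinarith [sq_nonneg (3 * y.im + 2 * t)]
  · rw [show y.im = -2 * t / 3 by linarith] at hre ⊢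
    linarith

noncomputable def cubic (s u : ℂ) : ℂ[X] := (X - C s) * (X ^ 2 - C (u ^ 2))

lemma cubic_eq_prod (s u : ℂ) : cubic s u = ∏ i, (X - C (![s, u, -u] i)) := by
  simp only [cubic, Fin.prod_univ_three, Matrix.cons_val_zero, Matrix.cons_val_one,
    Matrix.cons_val_two, Matrix.head_cons, Matrix.tail_cons, map_neg, map_pow]
  ring

lemma monic_cubic (s u : ℂ) : (cubic s u).Monic := by
  rw [cubic_eq_prod]
  exact monic_prod_of_monic _ _ fun i _ => monic_X_sub_C _

lemma natDegree_cubic (s u : ℂ) : (cubic s u).natDegree = 3 := by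
  rw [cubic_eq_prod, natDegree_prod_of_monic _ _ fun i _ => monic_X_sub_C _]
  simp

lemma eval_cubic_eq_zero {s u z : ℂ} : (cubic s u).eval z = 0 ↔ z = s ∨ z = u ∨ z = -u := by
  simp [cubic, sub_eq_zero, sq_eq_sq_iff_eq_or_eq_neg]

lemma eval_derivative_cubic (s u w : ℂ) :
    (derivative (cubic s u)).eval w = 3 * w ^ 2 - 2 * s * w - u ^ 2 := by
  simp only [cubic, derivative_mul, derivative_sub, derivative_X, derivative_C, derivative_X_pow,
    sub_zero, one_mul, Nat.cast_ofNat, Nat.add_one_sub_one, pow_one, eval_add, eval_sub, eval_pow,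
    eval_X, eval_C, eval_mul]
  ring

lemma cubic_mem_Sset {s u : ℂ} (hs : ‖s‖ ≤ 1) (hu : ‖u‖ ≤ 1) : cubic s u ∈ Sset 3 := by
  refine ⟨monic_cubic s u, natDegree_cubic s u, fun z hz => ?_⟩
  rcases eval_cubic_eq_zero.1 hz with rfl | rfl | rfl <;> simpa

lemma polyDelta_cubic_le (s s' u : ℂ) : polyDelta 3 (cubic s u) (cubic s' u) ≤ dist s s' :=
  polyDelta_le (cubic_eq_prod s u) (cubic_eq_prod s' u) dist_nonneg fun i => by
    fin_cases i <;> simp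

lemma sendovD_cubic_zero_le (u : ℂ) : sendovD (cubic 0 u) ≤ ‖u‖ / √3 := by
  set v : ℂ := u / (√3 : ℝ)
  have h3 : ((√3 : ℝ) : ℂ) ^ 2 = 3 := by exact_mod_cast Real.sq_sqrt (by norm_num : (0 : ℝ) ≤ 3)
  have hv : ∀ w, w ^ 2 = v ^ 2 → (derivative (cubic 0 u)).eval w = 0 := fun w hw => by
    rw [eval_derivative_cubic, hw, div_pow, h3]
    ring
  have h_half : 2⁻¹ ≤ (√3)⁻¹ := inv_anti₀ (by positivity) (by
    rw [Real.sqrt_le_left (by norm_num)]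
    norm_num)
  have h_le_one : (√3)⁻¹ ≤ 1 := inv_le_one_of_one_le₀ (by simp)
  have huv : dist u v ≤ ‖u‖ / √3 := by
    have : u - v = ((1 - (√3)⁻¹ : ℝ) : ℂ) * u := by
      simp only [v, ofReal_sub, ofReal_one, ofReal_inv]
      ring
    rw [dist_eq_norm, this, norm_mul, norm_real, Real.norm_of_nonneg (by linarith),
      div_eq_inv_mul]
    gcongr
    linarith
  refine sendovD_le (by positivity) fun z hz => ?_
  rcases eval_cubic_eq_zero.1 hz with rfl | rfl | rfl
  · calc critDist _ 0 ≤ dist 0 v := critDist_le (hv v rfl)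
      _ = ‖u‖ / √3 := by simp [v, abs_of_nonneg (Real.sqrt_nonneg 3)]
  · exact (critDist_le (hv v rfl)).trans huv
  · calc critDist _ (-u) ≤ dist (-u) (-v) := critDist_le (hv (-v) (neg_sq v))
      _ ≤ ‖u‖ / √3 := by rwa [dist_neg_neg]

lemma dist_eq_of_eval_derivative_cubic_eq_zero {u : ℂ} (hu : ‖u‖ = 1) {t : ℝ} (ht : t ^ 2 ≤ 3)
    {w : ℂ} (hw : (derivative (cubic (t * I * u) u)).eval w = 0) :
    dist (t * I * u) w = √(1 + t ^ 2) / √3 := by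
  have hu0 : u ≠ 0 := norm_ne_zero_iff.1 (by rw [hu]; norm_num)
  set y := (w - t * I * u) / u
  have hw' : w = t * I * u + u * y := by
    simp only [y]
    field_simp
    ring
  have hy : 3 * y ^ 2 + 4 * t * I * y = 1 + t ^ 2 := by
    rw [eval_derivative_cubic, hw'] at hw
    have : u ^ 2 * (3 * y ^ 2 + 4 * t * I * y - (1 + t ^ 2)) = 0 := by
      linear_combination hw - t ^ 2 * u ^ 2 * I_sq
    simpa [hu0, sub_eq_zero] using this
  rw [dist_comm, dist_eq_norm, hw', add_sub_cancel_left, norm_mul, hu, one_mul,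
    ← Real.sqrt_div (by positivity), ← norm_sq_eq_of_quadratic ht hy, Real.sqrt_sq (norm_nonneg _)]

lemma le_sendovD_cubic {u : ℂ} (hu : ‖u‖ = 1) {t : ℝ} (ht : t ^ 2 ≤ 3) :
    √(1 + t ^ 2) / √3 ≤ sendovD (cubic (t * I * u) u) :=
  (le_critDist (by rw [natDegree_cubic]; norm_num) fun _ hw =>
    (dist_eq_of_eval_derivative_cubic_eq_zero hu ht hw).ge).trans
      (critDist_le_sendovD (monic_cubic _ _).ne_zero (eval_cubic_eq_zero.2 (Or.inl rfl)))

/-- For every `θ ∈ ℝ`, the polynomial `p(z) = z³ + e^{iθ} z` is not a local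
maximum for Sendov's conjecture: for every `ε > 0` there is `q ∈ S₃` with `Δ(q,p) < ε`
and `d(q) > d(p)`. -/
theorem stmt_13 (θ : ℝ) (p : Polynomial ℂ)
    (hp : p = X ^ 3 + C (Complex.exp (θ * Complex.I)) * X) :
    ∀ ε > (0 : ℝ), ∃ q ∈ Sset 3, polyDelta 3 q p < ε ∧ sendovD p < sendovD q := by
  intro ε hε
  obtain ⟨u, hu2⟩ := IsAlgClosed.exists_pow_nat_eq (-exp (θ * I)) two_pos
  have hu : ‖u‖ = 1 := by
    rw [← pow_left_inj₀ (norm_nonneg u) zero_le_one two_ne_zero, ← norm_pow, hu2, norm_neg,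
      norm_exp_ofReal_mul_I, one_pow]
  have hp : p = cubic 0 u := by
    rw [hp, cubic, hu2]
    simp only [map_zero, sub_zero, map_neg]
    ring
  set t := min (ε / 2) 1
  have ht0 : 0 < t := by positivity
  have ht1 : t ≤ 1 := min_le_right _ _
  have hs : ‖(t : ℂ) * I * u‖ = t := by simp [hu, ht0.le]
  refine ⟨cubic (t * I * u) u, cubic_mem_Sset (hs.trans_le ht1) hu.le, ?_, ?_⟩
  · calc polyDelta 3 (cubic (t * I * u) u) p ≤ dist ((t : ℂ) * I * u) 0 :=
          hp ▸ polyDelta_cubic_le _ _ _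
      _ < ε := by rw [dist_zero_right, hs]; linarith [min_le_left (ε / 2) 1]
  · calc sendovD p ≤ 1 / √3 := hp ▸ hu ▸ sendovD_cubic_zero_le u
      _ < √(1 + t ^ 2) / √3 := by gcongr; rw [Real.lt_sqrt zero_le_one]; nlinarith
      _ ≤ _ := le_sendovD_cubic hu (by nlinarith)
end
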